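/- arXiv:1610.05273 — 4 statements merged into one kernel-verified Lean document; each statement's English description precedes it below -/
import Mathlib

section
/- Hardy-type inequality: let α > -1 and h : (0,∞) → ℝ measurable with ∫₀^∞ |h(t)|² t^{α+2} dt < ∞. Define H(t) = ∫_t^∞ |h(s)| ds. Then ∫₀^∞ H(t)² t^α dt ≤ (4/(α+1)²) ∫₀^∞ |h(t)|² t^{α+2} dt. -/
/-!
With `c = (α + 1) / 2`, Cauchy–Schwarz against the weight `s ^ (c + 1)` gives
`H(t)² ≤ (t ^ (-c) / c) ∫_t^∞ |h s|² s ^ (c + 1) ds`. Integrating against `t ^ α` and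
exchanging the order of integration, the inner integral `∫_0^s t ^ (c - 1) dt = s ^ c / c`
produces the second factor `1 / c`. Working with lower Lebesgue integrals in `ℝ≥0∞` makes
every step valid without integrability side conditions.
-/

open MeasureTheory Set
open scoped ENNReal

theorem ENNReal.lintegral_mul_sq_le {X : Type*} [MeasurableSpace X] (μ : Measure X)
    {f g : X → ℝ≥0∞} (hf : AEMeasurable f μ) (hg : AEMeasurable g μ) :
    (∫⁻ x, f x * g x ∂μ) ^ 2 ≤ (∫⁻ x, f x ^ 2 ∂μ) * ∫⁻ x, g x ^ 2 ∂μ := by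
  have holder := ENNReal.lintegral_mul_le_Lp_mul_Lq μ Real.HolderConjugate.two_two hf hg
  simp only [ENNReal.rpow_two, Pi.mul_apply] at holder
  calc (∫⁻ x, f x * g x ∂μ) ^ 2
      ≤ ((∫⁻ x, f x ^ 2 ∂μ) ^ (1 / 2 : ℝ) * (∫⁻ x, g x ^ 2 ∂μ) ^ (1 / 2 : ℝ)) ^ 2 := by
        gcongr
    _ = (∫⁻ x, f x ^ 2 ∂μ) * ∫⁻ x, g x ^ 2 ∂μ := by
        rw [mul_pow, ← ENNReal.rpow_two, ← ENNReal.rpow_two, ← ENNReal.rpow_mul,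
          ← ENNReal.rpow_mul]
        norm_num

theorem lintegral_Ioi_mul_lintegral_Ioi_swap (a : ℝ) {f w : ℝ → ℝ≥0∞} (hf : Measurable f)
    (hw : Measurable w) :
    ∫⁻ t in Ioi a, w t * ∫⁻ s in Ioi t, f s = ∫⁻ s in Ioi a, f s * ∫⁻ t in Ioo a s, w t := by
  have hswap : ∀ t s, w t * (Ioi t).indicator f s = f s * (Iio s).indicator w t := by
    intro t s
    by_cases hts : t < s <;> simp [hts, mul_comm]
  have hind : (fun p : ℝ × ℝ => (Ioi p.1).indicator f p.2)
      = {p : ℝ × ℝ | p.1 < p.2}.indicator (fun p => f p.2) := by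
    ext p; by_cases hp : p.1 < p.2 <;> simp [hp]
  have hmeas : Measurable (fun p : ℝ × ℝ => w p.1 * (Ioi p.1).indicator f p.2) :=
    (hw.comp measurable_fst).mul <| hind ▸
      (hf.comp measurable_snd).indicator (measurableSet_lt measurable_fst measurable_snd)
  calc ∫⁻ t in Ioi a, w t * ∫⁻ s in Ioi t, f s
      = ∫⁻ t in Ioi a, ∫⁻ s in Ioi a, w t * (Ioi t).indicator f s := by
        refine setLIntegral_congr_fun measurableSet_Ioi fun t ht => ?_
        rw [lintegral_const_mul _ (hf.indicator measurableSet_Ioi),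
          lintegral_indicator measurableSet_Ioi, Measure.restrict_restrict measurableSet_Ioi,
          inter_eq_self_of_subset_left (Ioi_subset_Ioi (le_of_lt ht))]
    _ = ∫⁻ s in Ioi a, ∫⁻ t in Ioi a, f s * (Iio s).indicator w t := by
        simp_rw [← hswap]
        exact lintegral_lintegral_swap hmeas.aemeasurable
    _ = ∫⁻ s in Ioi a, f s * ∫⁻ t in Ioo a s, w t := by
        refine setLIntegral_congr_fun measurableSet_Ioi fun s _ => ?_
        rw [lintegral_const_mul _ (hw.indicator measurableSet_Iio),
          lintegral_indicator measurableSet_Iio, Measure.restrict_restrict measurableSet_Iio,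
          Iio_inter_Ioi]

theorem lintegral_Ioo_zero_rpow {q : ℝ} (hq : -1 < q) {s : ℝ} (hs : 0 ≤ s) :
    ∫⁻ t in Ioo 0 s, ENNReal.ofReal (t ^ q) = ENNReal.ofReal (s ^ (q + 1) / (q + 1)) := by
  have hint : IntegrableOn (fun t : ℝ => t ^ q) (Ioo 0 s) :=
    ((intervalIntegrable_iff_integrableOn_Ioc_of_le hs).mp
      (intervalIntegral.intervalIntegrable_rpow' hq)).mono_set Ioo_subset_Ioc_self
  rw [← ofReal_integral_eq_lintegral_ofReal hint
    ((ae_restrict_mem measurableSet_Ioo).mono fun t ht => Real.rpow_nonneg ht.1.le q),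
    ← integral_Ioc_eq_integral_Ioo, ← intervalIntegral.integral_of_le hs,
    integral_rpow (Or.inl hq), Real.zero_rpow (by linarith), sub_zero]

theorem lintegral_Ioi_rpow_of_lt {p : ℝ} (hp : p < -1) {t : ℝ} (ht : 0 < t) :
    ∫⁻ s in Ioi t, ENNReal.ofReal (s ^ p) = ENNReal.ofReal (-t ^ (p + 1) / (p + 1)) := by
  rw [← ofReal_integral_eq_lintegral_ofReal (integrableOn_Ioi_rpow_of_lt hp ht)
    ((ae_restrict_mem measurableSet_Ioi).mono fun s hs => Real.rpow_nonneg (ht.trans hs).le p),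
    integral_Ioi_rpow_of_lt hp ht]

theorem ENNReal.ofReal_rpow_sq {s : ℝ} (hs : 0 ≤ s) (a : ℝ) :
    ENNReal.ofReal (s ^ a) ^ 2 = ENNReal.ofReal (s ^ (2 * a)) := by
  rw [← ENNReal.ofReal_pow (Real.rpow_nonneg hs a), ← Real.rpow_natCast, ← Real.rpow_mul hs,
    Nat.cast_ofNat, mul_comm]

theorem sq_lintegral_Ioi_le {g : ℝ → ℝ≥0∞} (hg : Measurable g) {c : ℝ} (hc : 0 < c) {t : ℝ}
    (ht : 0 < t) :
    (∫⁻ s in Ioi t, g s) ^ 2 ≤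
      (∫⁻ s in Ioi t, g s ^ 2 * ENNReal.ofReal (s ^ (c + 1))) * ENNReal.ofReal (t ^ (-c) / c) := by
  obtain ⟨b, hb⟩ : ∃ b : ℝ, 2 * b = c + 1 := ⟨(c + 1) / 2, by ring⟩
  have hsplit : ∫⁻ s in Ioi t, g s =
      ∫⁻ s in Ioi t, (g s * ENNReal.ofReal (s ^ b)) * ENNReal.ofReal (s ^ (-b)) := by
    refine setLIntegral_congr_fun measurableSet_Ioi fun s hs => ?_
    have hs0 : 0 < s := ht.trans hs
    rw [mul_assoc, ← ENNReal.ofReal_mul (Real.rpow_nonneg hs0.le _), ← Real.rpow_add hs0,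
      add_neg_cancel, Real.rpow_zero, ENNReal.ofReal_one, mul_one]
  have hweight : ∫⁻ s in Ioi t, ENNReal.ofReal (s ^ (-b)) ^ 2 = ENNReal.ofReal (t ^ (-c) / c) := by
    rw [setLIntegral_congr_fun measurableSet_Ioi fun s (hs : t < s) =>
      ENNReal.ofReal_rpow_sq (ht.trans hs).le (-b), lintegral_Ioi_rpow_of_lt (by linarith) ht,
      show 2 * -b + 1 = -c by linarith, neg_div_neg_eq]
  calc (∫⁻ s in Ioi t, g s) ^ 2
      ≤ (∫⁻ s in Ioi t, (g s * ENNReal.ofReal (s ^ b)) ^ 2) *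
          ∫⁻ s in Ioi t, ENNReal.ofReal (s ^ (-b)) ^ 2 := by
        rw [hsplit]
        exact ENNReal.lintegral_mul_sq_le _ (by fun_prop) (by fun_prop)
    _ = _ := by
        rw [hweight]
        congr 1
        refine setLIntegral_congr_fun measurableSet_Ioi fun s (hs : t < s) => ?_
        rw [mul_pow, ENNReal.ofReal_rpow_sq (ht.trans hs).le, hb]

theorem antitone_lintegral_Ioi (f : ℝ → ℝ≥0∞) : Antitone fun t => ∫⁻ s in Ioi t, f s :=
  fun _ _ hab => lintegral_mono_set (Ioi_subset_Ioi hab)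

theorem lintegral_Ioi_rpow_mul_lintegral_Ioi {F : ℝ → ℝ≥0∞} (hF : Measurable F) {c : ℝ}
    (hc : 0 < c) :
    ∫⁻ t in Ioi 0, ENNReal.ofReal (t ^ (c - 1)) * ∫⁻ s in Ioi t, F s =
      ∫⁻ s in Ioi 0, ENNReal.ofReal (s ^ c / c) * F s := by
  rw [lintegral_Ioi_mul_lintegral_Ioi_swap 0 hF (by fun_prop)]
  refine setLIntegral_congr_fun measurableSet_Ioi fun s (hs : 0 < s) => ?_
  rw [lintegral_Ioo_zero_rpow (by linarith) hs.le, sub_add_cancel, mul_comm]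

theorem lintegral_sq_lintegral_Ioi_mul_rpow_le {α : ℝ} (hα : -1 < α) {g : ℝ → ℝ≥0∞}
    (hg : Measurable g) :
    ∫⁻ t in Ioi 0, (∫⁻ s in Ioi t, g s) ^ 2 * ENNReal.ofReal (t ^ α) ≤
      ENNReal.ofReal (4 / (α + 1) ^ 2) * ∫⁻ t in Ioi 0, g t ^ 2 * ENNReal.ofReal (t ^ (α + 2)) := by
  obtain ⟨c, rfl⟩ : ∃ c : ℝ, α = 2 * c - 1 := ⟨(α + 1) / 2, by ring⟩
  have hc : 0 < c := by linarith
  set G : ℝ → ℝ≥0∞ := fun s => g s ^ 2 * ENNReal.ofReal (s ^ (c + 1))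
  calc ∫⁻ t in Ioi 0, (∫⁻ s in Ioi t, g s) ^ 2 * ENNReal.ofReal (t ^ (2 * c - 1))
      ≤ ∫⁻ t in Ioi 0, ENNReal.ofReal c⁻¹ *
          (ENNReal.ofReal (t ^ (c - 1)) * ∫⁻ s in Ioi t, G s) := by
        refine setLIntegral_mono' measurableSet_Ioi fun t (ht : 0 < t) => ?_
        have hweight : ENNReal.ofReal (t ^ (-c) / c) * ENNReal.ofReal (t ^ (2 * c - 1)) =
            ENNReal.ofReal c⁻¹ * ENNReal.ofReal (t ^ (c - 1)) := by
          rw [← ENNReal.ofReal_mul (by positivity), ← ENNReal.ofReal_mul (by positivity),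
            div_mul_eq_mul_div, ← Real.rpow_add ht, show -c + (2 * c - 1) = c - 1 by ring,
            inv_mul_eq_div]
        grw [sq_lintegral_Ioi_le hg hc ht, mul_assoc, hweight]
        exact le_of_eq (by ring)
    _ = ENNReal.ofReal c⁻¹ *
          ∫⁻ s in Ioi 0, ENNReal.ofReal c⁻¹ * (g s ^ 2 * ENNReal.ofReal (s ^ (2 * c - 1 + 2))) := by
        have hGm : Measurable fun t => ∫⁻ s in Ioi t, G s := (antitone_lintegral_Ioi G).measurable
        rw [lintegral_const_mul _ (by fun_prop),
          lintegral_Ioi_rpow_mul_lintegral_Ioi (by fun_prop) hc]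
        congr 1
        refine setLIntegral_congr_fun measurableSet_Ioi fun s (hs : 0 < s) => ?_
        have hweight : ENNReal.ofReal (s ^ c / c) * ENNReal.ofReal (s ^ (c + 1)) =
            ENNReal.ofReal c⁻¹ * ENNReal.ofReal (s ^ (2 * c - 1 + 2)) := by
          rw [← ENNReal.ofReal_mul (by positivity), ← ENNReal.ofReal_mul (by positivity),
            div_mul_eq_mul_div, ← Real.rpow_add hs, show c + (c + 1) = 2 * c - 1 + 2 by ring,
            inv_mul_eq_div]
        rw [mul_left_comm, hweight, mul_left_comm]
    _ = _ := by
        rw [lintegral_const_mul _ (by fun_prop), ← mul_assoc, ← ENNReal.ofReal_mul (by positivity)]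
        congr 2
        field_simp
        ring

/-- Hardy-type inequality: for `α > -1` and `h` measurable with
`∫₀^∞ |h|² t^{α+2} dt < ∞`, with `H(t) = ∫_t^∞ |h(s)| ds` one has
`∫₀^∞ H(t)² t^α dt ≤ (4/(α+1)²) ∫₀^∞ |h(t)|² t^{α+2} dt`. -/
theorem stmt3 (α : ℝ) (hα : -1 < α) (h : ℝ → ℝ) (hmeas : Measurable h)
    (hfin : IntegrableOn (fun t => h t ^ 2 * t ^ (α + 2)) (Ioi 0)) :
    (∫ t in Ioi (0 : ℝ), (∫ s in Ioi t, |h s|) ^ 2 * t ^ α) ≤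
      4 / (α + 1) ^ 2 * ∫ t in Ioi (0 : ℝ), h t ^ 2 * t ^ (α + 2) := by
  set L : ℝ → ℝ≥0∞ := fun t => ∫⁻ s in Ioi t, ENNReal.ofReal |h s|
  have hH : ∀ t, ∫ s in Ioi t, |h s| = (L t).toReal := fun t =>
    integral_eq_lintegral_of_nonneg_ae (ae_of_all _ fun s => abs_nonneg _)
      hmeas.abs.aestronglyMeasurable
  have hL : Measurable L := (antitone_lintegral_Ioi _).measurable
  have hrhs : ∫⁻ t in Ioi 0, ENNReal.ofReal |h t| ^ 2 * ENNReal.ofReal (t ^ (α + 2)) =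
      ENNReal.ofReal (∫ t in Ioi 0, h t ^ 2 * t ^ (α + 2)) := by
    rw [ofReal_integral_eq_lintegral_ofReal hfin ((ae_restrict_mem measurableSet_Ioi).mono
      fun t (ht : 0 < t) => by positivity)]
    refine setLIntegral_congr_fun measurableSet_Ioi fun t (ht : 0 < t) => ?_
    rw [← ENNReal.ofReal_pow (abs_nonneg _), sq_abs, ← ENNReal.ofReal_mul (sq_nonneg _)]
  have hardy := lintegral_sq_lintegral_Ioi_mul_rpow_le hα hmeas.abs.ennreal_ofReal
  rw [hrhs, ← ENNReal.ofReal_mul (by positivity)] at hardy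
  simp_rw [hH]
  rw [integral_eq_lintegral_of_nonneg_ae ((ae_restrict_mem measurableSet_Ioi).mono
    fun t (ht : 0 < t) => by positivity) (by fun_prop)]
  have hnonneg : 0 ≤ ∫ t in Ioi 0, h t ^ 2 * t ^ (α + 2) :=
    setIntegral_nonneg measurableSet_Ioi fun t (ht : 0 < t) => by positivity
  refine ENNReal.toReal_le_of_le_ofReal (by positivity) (le_trans ?_ hardy)
  refine lintegral_mono fun t => ?_
  rw [ENNReal.ofReal_mul (sq_nonneg _), ENNReal.ofReal_pow ENNReal.toReal_nonneg]
  gcongr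
  exact ENNReal.ofReal_toReal_le
end

section
/- Reverse Hölder inequality for the weight ω(x) = |x_d|^α: if -1 < α < 0, 1 < p < ∞ and αp > -1, then there is a constant C = C(d, α, p) such that for every ball B ⊂ ℝ^d, ( (1/|B|)∫_B ω^p dx )^{1/p} ≤ C (1/|B|)∫_B ω dx. -/
/-!
Put `m = max |x₀_d| r`. For `-1 < β ≤ 0` the average of `|x_d|^β` over `B(x₀, r)` is at most
`K m^β`: pointwise when `|x₀_d| ≥ 2r`, since then `|x_d| ≥ m/2` on the ball; otherwise by Fubini
over a cube, using `∫_{-R}^{R} |t|^β dt = 2 R^(β+1)/(β+1)` and `r ≥ m/2`. Conversely, since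
`|x_d| ≤ 2m` on the ball and `α ≤ 0`, the average of `|x_d|^α` is at least `(2m)^α`.
The upper bound with `β = αp` gives `(⨍_B ω^p)^(1/p) ≤ K^(1/p) m^α ≤ K^(1/p) 2^(-α) ⨍_B ω`.
-/

open MeasureTheory Metric Set

lemma lintegral_Ioo_neg_abs_rpow {β : ℝ} (hβ : -1 < β) {R : ℝ} (hR : 0 ≤ R) :
    ∫⁻ t in Ioo (-R) R, ENNReal.ofReal (|t| ^ β) =
      ENNReal.ofReal (2 * R ^ (β + 1) / (β + 1)) := by
  have hint : IntegrableOn (fun t : ℝ => |t| ^ β) (ball 0 R) :=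
    integrableOn_ball_of_norm_le_rpow (C := 1) (α := -β) (by simp) (by simp; linarith)
      (ae_of_all _ fun t => by simp [abs_of_nonneg (Real.rpow_nonneg (abs_nonneg t) β)])
      (by fun_prop : Measurable fun t : ℝ => |t| ^ β).aestronglyMeasurable
  rw [Real.ball_eq_Ioo, zero_sub, zero_add] at hint
  rw [← ofReal_integral_eq_lintegral_ofReal hint
    (Filter.Eventually.of_forall fun t => Real.rpow_nonneg (abs_nonneg t) β)]
  congr 1
  calc ∫ t in Ioo (-R) R, |t| ^ β = ∫ t, (Iio R).indicator (· ^ β) |t| := by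
        rw [← integral_indicator measurableSet_Ioo]
        congr with t
        simp [indicator, abs_lt]
    _ = 2 * ∫ y in Ioo 0 R, y ^ β := by
        rw [integral_comp_abs, setIntegral_indicator measurableSet_Iio, Ioi_inter_Iio]
    _ = 2 * R ^ (β + 1) / (β + 1) := by
        rw [← integral_Ioc_eq_integral_Ioo, ← intervalIntegral.integral_of_le hR,
          integral_rpow (Or.inl hβ), Real.zero_rpow (by linarith)]
        ring

lemma lintegral_Ioo_abs_rpow_le {β : ℝ} (hβ1 : -1 < β) (hβ0 : β ≤ 0) :
    ∃ K > 0, ∀ c r : ℝ, 0 < r →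
      ∫⁻ t in Ioo (c - r) (c + r), ENNReal.ofReal (|t| ^ β) ≤
        ENNReal.ofReal (K * r * max |c| r ^ β) := by
  have hβ1' : 0 < β + 1 := by linarith
  refine ⟨2 * 2 ^ (-β) * (1 + 3 ^ (β + 1) / (β + 1)), by positivity, fun c r hr => ?_⟩
  set m := max |c| r
  have hm : 0 < m := lt_max_of_lt_right hr
  have hhalf : ∀ s, m / 2 ≤ s → s ^ β ≤ 2 ^ (-β) * m ^ β := fun s hs => by
    calc s ^ β ≤ (m / 2) ^ β := Real.rpow_le_rpow_of_nonpos (half_pos hm) hs hβ0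
      _ = 2 ^ (-β) * m ^ β := by
        rw [Real.div_rpow hm.le zero_le_two, Real.rpow_neg zero_le_two]; ring
  have hmβ : 0 < 2 ^ (-β) * m ^ β := by positivity
  have hA : 0 ≤ 2 * 3 ^ (β + 1) / (β + 1) * r := by positivity
  have hK : 2 * 2 ^ (-β) * (1 + 3 ^ (β + 1) / (β + 1)) * r * m ^ β =
      2 ^ (-β) * m ^ β * (2 * r) + 2 * 3 ^ (β + 1) / (β + 1) * r * (2 ^ (-β) * m ^ β) := by ring
  rcases le_or_gt (2 * r) |c| with hfar | hnear
  · have hpt : ∀ t ∈ Ioo (c - r) (c + r),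
        ENNReal.ofReal (|t| ^ β) ≤ ENNReal.ofReal (2 ^ (-β) * m ^ β) := fun t ht => by
      refine ENNReal.ofReal_le_ofReal (hhalf _ ?_)
      have : |c| - |t| ≤ |c - t| := abs_sub_abs_le_abs_sub c t
      have : |c - t| < r := abs_sub_lt_iff.2 ⟨by linarith [ht.1], by linarith [ht.2]⟩
      have : m = |c| := max_eq_left (by linarith)
      linarith
    calc ∫⁻ t in Ioo (c - r) (c + r), ENNReal.ofReal (|t| ^ β)
        ≤ ∫⁻ _ in Ioo (c - r) (c + r), ENNReal.ofReal (2 ^ (-β) * m ^ β) :=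
          setLIntegral_mono measurable_const hpt
      _ = ENNReal.ofReal (2 ^ (-β) * m ^ β * (2 * r)) := by
          rw [setLIntegral_const, Real.volume_Ioo, ← ENNReal.ofReal_mul hmβ.le]; ring_nf
      _ ≤ _ := ENNReal.ofReal_le_ofReal <| by rw [hK]; nlinarith
  · have hsub : Ioo (c - r) (c + r) ⊆ Ioo (-(3 * r)) (3 * r) := fun t ht => by
      obtain ⟨h1, h2⟩ := abs_lt.1 hnear
      exact ⟨by linarith [ht.1], by linarith [ht.2]⟩
    have hrβ : r ^ β ≤ 2 ^ (-β) * m ^ β :=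
      hhalf r (by linarith [max_le hnear.le (by linarith : r ≤ 2 * r)])
    calc ∫⁻ t in Ioo (c - r) (c + r), ENNReal.ofReal (|t| ^ β)
        ≤ ∫⁻ t in Ioo (-(3 * r)) (3 * r), ENNReal.ofReal (|t| ^ β) := lintegral_mono_set hsub
      _ = ENNReal.ofReal (2 * 3 ^ (β + 1) / (β + 1) * r * r ^ β) := by
          rw [lintegral_Ioo_neg_abs_rpow hβ1 (by positivity),
            Real.mul_rpow (by norm_num) hr.le, Real.rpow_add hr, Real.rpow_one]
          ring_nf
      _ ≤ _ := ENNReal.ofReal_le_ofReal <| by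
          rw [hK]; nlinarith [mul_le_mul_of_nonneg_left hrβ hA]

variable {ι : Type*} [Fintype ι]

lemma EuclideanSpace.abs_apply_sub_lt_of_mem_ball {x x₀ : EuclideanSpace ℝ ι} {r : ℝ}
    (hx : x ∈ ball x₀ r) (i : ι) : |x i - x₀ i| < r :=
  (PiLp.dist_apply_le x x₀ i).trans_lt hx

lemma EuclideanSpace.lintegral_ball_comp_apply_le (i : ι) {g : ℝ → ENNReal} (hg : Measurable g)
    (x₀ : EuclideanSpace ℝ ι) (r : ℝ) :
    ∫⁻ x in ball x₀ r, g (x i) ≤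
      ENNReal.ofReal (2 * r) ^ (Fintype.card ι - 1) * ∫⁻ t in Ioo (x₀ i - r) (x₀ i + r), g t := by
  classical
  set I : ι → Set ℝ := fun j => Ioo (x₀ j - r) (x₀ j + r)
  have hsub : ball x₀ r ⊆ WithLp.ofLp ⁻¹' univ.pi I := fun x hx j _ => by
    have := abs_sub_lt_iff.1 (abs_apply_sub_lt_of_mem_ball hx j)
    exact ⟨by linarith, by linarith⟩
  calc ∫⁻ x in ball x₀ r, g (x i)
      ≤ ∫⁻ x in WithLp.ofLp ⁻¹' univ.pi I, g (x i) := lintegral_mono_set hsub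
    _ = ∫⁻ y in univ.pi I, g (y i) :=
        (PiLp.volume_preserving_ofLp ι).setLIntegral_comp_preimage
          (MeasurableSet.univ_pi fun _ => measurableSet_Ioo) (hg.comp (measurable_pi_apply i))
    _ = ∫⁻ t, g t ∂(Measure.pi fun j => volume.restrict (I j)).map (Function.eval i) := by
        rw [volume_pi, Measure.restrict_pi_pi, lintegral_map hg (measurable_pi_apply i)]
    _ = ENNReal.ofReal (2 * r) ^ (Fintype.card ι - 1) * ∫⁻ t in I i, g t := by
        rw [Measure.pi_map_eval, lintegral_smul_measure]
        have hlen : ∀ j, volume (I j) = ENNReal.ofReal (2 * r) := fun j => by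
          rw [Real.volume_Ioo]; ring_nf
        simp only [Measure.restrict_apply MeasurableSet.univ, univ_inter, hlen, Finset.prod_const,
          Finset.card_erase_of_mem (Finset.mem_univ i), Finset.card_univ, smul_eq_mul]

lemma EuclideanSpace.ae_apply_ne (i : ι) (a : ℝ) : ∀ᵐ x : EuclideanSpace ℝ ι, x i ≠ a :=
  (PiLp.volume_preserving_ofLp ι).quasiMeasurePreserving.ae (Measure.ae_eval_ne _ i a)

lemma EuclideanSpace.lintegral_ball_abs_apply_rpow_le {β : ℝ} (hβ1 : -1 < β) (hβ0 : β ≤ 0)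
    (i : ι) :
    ∃ K > 0, ∀ (x₀ : EuclideanSpace ℝ ι) (r : ℝ), 0 < r →
      ∫⁻ x in ball x₀ r, ENNReal.ofReal (|x i| ^ β) ≤
        ENNReal.ofReal (K * max |x₀ i| r ^ β) * volume (ball x₀ r) := by
  obtain ⟨K, hK, hline⟩ := lintegral_Ioo_abs_rpow_le hβ1 hβ0
  have hn : Fintype.card ι ≠ 0 := (Fintype.card_pos_iff.2 ⟨i⟩).ne'
  set v := (volume (ball (0 : EuclideanSpace ℝ ι) 1)).toReal
  have hv : 0 < v := ENNReal.toReal_pos (measure_ball_pos _ _ one_pos).ne' measure_ball_lt_top.ne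
  refine ⟨2 ^ (Fintype.card ι - 1) * K / v, by positivity, fun x₀ r hr => ?_⟩
  have hm : 0 < max |x₀ i| r := lt_max_of_lt_right hr
  calc ∫⁻ x in ball x₀ r, ENNReal.ofReal (|x i| ^ β)
      ≤ ENNReal.ofReal (2 * r) ^ (Fintype.card ι - 1) *
          ∫⁻ t in Ioo (x₀ i - r) (x₀ i + r), ENNReal.ofReal (|t| ^ β) :=
        lintegral_ball_comp_apply_le i (by fun_prop) x₀ r
    _ ≤ ENNReal.ofReal (2 * r) ^ (Fintype.card ι - 1) *
          ENNReal.ofReal (K * r * max |x₀ i| r ^ β) := by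
        gcongr; exact hline _ _ hr
    _ = _ := by
        rw [Measure.addHaar_ball_of_pos _ _ hr, finrank_euclideanSpace,
          ← ENNReal.ofReal_toReal measure_ball_lt_top.ne, ← ENNReal.ofReal_pow (by positivity),
          ← ENNReal.ofReal_mul (by positivity), ← ENNReal.ofReal_mul (by positivity),
          ← ENNReal.ofReal_mul (by positivity)]
        congr 1
        rw [← pow_sub_one_mul hn r]
        field_simp
        ring

lemma EuclideanSpace.setIntegral_ball_abs_apply_rpow_le {β : ℝ} (hβ1 : -1 < β) (hβ0 : β ≤ 0)
    (i : ι) :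
    ∃ K > 0, ∀ (x₀ : EuclideanSpace ℝ ι) (r : ℝ), 0 < r →
      IntegrableOn (fun x => |x i| ^ β) (ball x₀ r) ∧
        ∫ x in ball x₀ r, |x i| ^ β ≤ K * max |x₀ i| r ^ β * volume.real (ball x₀ r) := by
  obtain ⟨K, hK, hball⟩ := lintegral_ball_abs_apply_rpow_le hβ1 hβ0 i
  refine ⟨K, hK, fun x₀ r hr => ?_⟩
  have hnn : 0 ≤ᵐ[volume.restrict (ball x₀ r)] fun x : EuclideanSpace ℝ ι => |x i| ^ β :=
    ae_of_all _ fun x => Real.rpow_nonneg (abs_nonneg _) β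
  have hmeas : AEStronglyMeasurable (fun x : EuclideanSpace ℝ ι => |x i| ^ β)
      (volume.restrict (ball x₀ r)) :=
    (by fun_prop : Measurable fun x : EuclideanSpace ℝ ι => |x i| ^ β).aestronglyMeasurable
  have hfin : ENNReal.ofReal (K * max |x₀ i| r ^ β) * volume (ball x₀ r) ≠ ⊤ :=
    ENNReal.mul_ne_top ENNReal.ofReal_ne_top measure_ball_lt_top.ne
  refine ⟨(lintegral_ofReal_ne_top_iff_integrable hmeas hnn).1
    (ne_top_of_le_ne_top hfin (hball x₀ r hr)), ?_⟩
  rw [integral_eq_lintegral_of_nonneg_ae hnn hmeas]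
  calc _ ≤ (ENNReal.ofReal (K * max |x₀ i| r ^ β) * volume (ball x₀ r)).toReal :=
        ENNReal.toReal_mono hfin (hball x₀ r hr)
    _ = _ := by
        have : 0 < max |x₀ i| r := lt_max_of_lt_right hr
        rw [ENNReal.toReal_mul, ENNReal.toReal_ofReal (by positivity), measureReal_def]

lemma EuclideanSpace.rpow_mul_measureReal_ball_le_setIntegral_abs_apply_rpow {α : ℝ}
    (hα : α ≤ 0) (i : ι) (x₀ : EuclideanSpace ℝ ι) (r : ℝ)
    (hint : IntegrableOn (fun x => |x i| ^ α) (ball x₀ r)) :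
    (2 * max |x₀ i| r) ^ α * volume.real (ball x₀ r) ≤ ∫ x in ball x₀ r, |x i| ^ α := by
  rw [mul_comm, ← smul_eq_mul, ← setIntegral_const]
  refine setIntegral_mono_ae_restrict (integrableOn_const measure_ball_lt_top.ne) hint ?_
  -- `0 ^ α = 0` in Lean, so the hyperplane `x i = 0` must be discarded as a null set.
  filter_upwards [ae_restrict_mem measurableSet_ball, ae_restrict_of_ae (ae_apply_ne i 0)]
    with x hx hx0
  refine Real.rpow_le_rpow_of_nonpos (abs_pos.2 hx0) ?_ hα
  have := abs_sub_abs_le_abs_sub (x i) (x₀ i)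
  have := abs_apply_sub_lt_of_mem_ball hx i
  linarith [le_max_left |x₀ i| r, le_max_right |x₀ i| r]

/-- Reverse Hölder inequality for `ω(x) = |x_d|^α`: if `-1 < α < 0`, `1 < p`
and `αp > -1`, then for every ball `B`, `((1/|B|)∫_B ω^p)^{1/p} ≤ C (1/|B|)∫_B ω`
with `C = C(d, α, p)`. -/
theorem stmt5 (d : ℕ) (α p : ℝ) (hα₁ : -1 < α) (hα₂ : α < 0) (hp : 1 < p)
    (hαp : -1 < α * p) :
    ∃ C > 0, ∀ (x₀ : EuclideanSpace ℝ (Fin (d + 1))) (r : ℝ), 0 < r →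
      ((∫ x in Metric.ball x₀ r, (|x (Fin.last d)| ^ α) ^ p) /
          (volume (Metric.ball x₀ r)).toReal) ^ (1 / p) ≤
        C * ((∫ x in Metric.ball x₀ r, |x (Fin.last d)| ^ α) /
          (volume (Metric.ball x₀ r)).toReal) := by
  have hp0 : 0 < p := by linarith
  obtain ⟨K, hK, hupper⟩ := EuclideanSpace.setIntegral_ball_abs_apply_rpow_le hαp
    (by nlinarith) (Fin.last d)
  obtain ⟨_, _, hint⟩ := EuclideanSpace.setIntegral_ball_abs_apply_rpow_le hα₁ hα₂.le (Fin.last d)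
  refine ⟨K ^ (1 / p) / 2 ^ α, by positivity, fun x₀ r hr => ?_⟩
  set m := max |x₀ (Fin.last d)| r
  have hm : 0 < m := lt_max_of_lt_right hr
  have hV : 0 < volume.real (ball x₀ r) :=
    ENNReal.toReal_pos (measure_ball_pos _ _ hr).ne' measure_ball_lt_top.ne
  simp_rw [← Real.rpow_mul (abs_nonneg _), ← measureReal_def]
  calc ((∫ x in ball x₀ r, |x (Fin.last d)| ^ (α * p)) / volume.real (ball x₀ r)) ^ (1 / p)
      ≤ (K * m ^ (α * p)) ^ (1 / p) := by
        gcongr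
        exact (div_le_iff₀ hV).2 (hupper x₀ r hr).2
    _ = K ^ (1 / p) / 2 ^ α * (2 * m) ^ α := by
        rw [Real.mul_rpow hK.le (by positivity), ← Real.rpow_mul hm.le,
          Real.mul_rpow zero_le_two hm.le, mul_assoc, mul_one_div_cancel hp0.ne', mul_one]
        field_simp
    _ ≤ K ^ (1 / p) / 2 ^ α * ((∫ x in ball x₀ r, |x (Fin.last d)| ^ α) /
          volume.real (ball x₀ r)) := by
        gcongr
        exact (le_div_iff₀ hV).2 <|
          EuclideanSpace.rpow_mul_measureReal_ball_le_setIntegral_abs_apply_rpow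
            hα₂.le _ x₀ r (hint x₀ r hr).1
end

section
/- Let Ω ⊂ ℝ^d be a bounded Lipschitz domain and R a function on Ω satisfying, for some constants C and exponent σ ∈ (0,1): |R(x)| ≤ C (ε/δ(x))^{1-σ} when δ(x) ≥ ε, and |R(x)| ≤ C(1 + |log δ(x)|) when δ(x) ≤ ε, where δ(x) = dist(x, ∂Ω) and 0 < ε < 1. Then for every 1 < q < ∞, ‖R‖_{L^q(Ω)} ≤ C' ε^{1/q}(1 + |log ε|), with C' depending on q, σ, C, and Ω. -/
/-!
Split `Ω` at distance `ε` from the boundary. Far from it, `|R|^q ≤ C^q (ε/δ)^α` with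
`α = (1-σ) q > 1`; near it, since `log` grows slower than any power,
`|R|^q ≲ (1 + |log ε|)^q (ε/δ)^(1/2)`. Each `(ε/δ)^γ` is integrated over the dyadic shells
`{t ≤ δ ≤ 2t}`, of measure at most `2 C₁ t` by the layer bound; the resulting geometric series
sum to `O(ε)` because `α > 1` on the far side and `1/2 < 1` on the near side.
-/

open MeasureTheory Filter Topology

section Layers

variable {X : Type*} [MeasurableSpace X] {ν : Measure X} {f : X → ℝ} {C₁ : ℝ}

theorem measure_le_le_of_measure_lt_le
    (hb : ∀ t, 0 < t → ν {x | f x < t} ≤ ENNReal.ofReal (C₁ * t)) {s : ℝ} (hs : 0 ≤ s) :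
    ν {x | f x ≤ s} ≤ ENNReal.ofReal (C₁ * s) := by
  have hlim :
      Tendsto (fun t => ENNReal.ofReal (C₁ * t)) (𝓝[>] s) (𝓝 (ENNReal.ofReal (C₁ * s))) :=
    (ENNReal.continuous_ofReal.tendsto _).comp
      ((continuous_const_mul C₁).tendsto s |>.mono_left nhdsWithin_le_nhds)
  refine ge_of_tendsto hlim ?_
  filter_upwards [self_mem_nhdsWithin] with t (ht : s < t)
  exact (measure_mono fun x (hx : f x ≤ s) => hx.trans_lt ht).trans (hb t (hs.trans_lt ht))

theorem ae_pos_of_measure_le_le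
    (hb : ∀ s, 0 ≤ s → ν {x | f x ≤ s} ≤ ENNReal.ofReal (C₁ * s)) : ∀ᵐ x ∂ν, 0 < f x := by
  have hnull : ν {x | f x ≤ 0} = 0 := by simpa using hb 0 le_rfl
  filter_upwards [measure_eq_zero_iff_ae_notMem.1 hnull] with x hx
  simpa using hx

theorem setLIntegral_div_rpow_shell_le
    (hb : ∀ s, 0 ≤ s → ν {x | f x ≤ s} ≤ ENNReal.ofReal (C₁ * s))
    {γ ε t : ℝ} (hγ : 0 ≤ γ) (hε : 0 < ε) (ht : 0 < t) :
    ∫⁻ x in {x | t ≤ f x ∧ f x ≤ 2 * t}, ENNReal.ofReal ((ε / f x) ^ γ) ∂ν ≤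
      ENNReal.ofReal (2 * C₁ * ε * (t / ε) ^ (1 - γ)) := by
  calc ∫⁻ x in {x | t ≤ f x ∧ f x ≤ 2 * t}, ENNReal.ofReal ((ε / f x) ^ γ) ∂ν
      ≤ ∫⁻ _ in {x | t ≤ f x ∧ f x ≤ 2 * t}, ENNReal.ofReal ((ε / t) ^ γ) ∂ν :=
        setLIntegral_mono measurable_const fun x hx => ENNReal.ofReal_le_ofReal <|
          Real.rpow_le_rpow (div_nonneg hε.le (ht.le.trans hx.1))
            (div_le_div_of_nonneg_left hε.le ht hx.1) hγ
    _ ≤ ENNReal.ofReal ((ε / t) ^ γ) * ENNReal.ofReal (C₁ * (2 * t)) := by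
        rw [setLIntegral_const]
        gcongr
        exact (measure_mono fun x hx => hx.2).trans (hb _ (by positivity))
    _ = ENNReal.ofReal (2 * C₁ * ε * (t / ε) ^ (1 - γ)) := by
        rw [← ENNReal.ofReal_mul (by positivity), Real.rpow_sub (by positivity), Real.rpow_one,
          ← inv_div, Real.inv_rpow (by positivity)]
        field_simp

theorem setLIntegral_div_rpow_le_of_ae_mem_shells
    (hb : ∀ s, 0 ≤ s → ν {x | f x ≤ s} ≤ ENNReal.ofReal (C₁ * s)) (hC₁ : 0 ≤ C₁)
    {γ ε r : ℝ} (hγ : 0 ≤ γ) (hε : 0 < ε) (hr₀ : 0 ≤ r) (hr₁ : r < 1)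
    {S : Set X} {t : ℕ → ℝ} (ht : ∀ k, 0 < t k) (htr : ∀ k, (t k / ε) ^ (1 - γ) ≤ r ^ k)
    (hS : ∀ᵐ x ∂ν, x ∈ S → ∃ k, t k ≤ f x ∧ f x ≤ 2 * t k) :
    ∫⁻ x in S, ENNReal.ofReal ((ε / f x) ^ γ) ∂ν ≤ ENNReal.ofReal (2 * C₁ / (1 - r) * ε) := by
  set shell : ℕ → Set X := fun k => {x | t k ≤ f x ∧ f x ≤ 2 * t k}
  have hsub : S ≤ᵐ[ν] ⋃ k, shell k := hS.mono fun x hx hxS => Set.mem_iUnion.2 (hx hxS)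
  calc ∫⁻ x in S, ENNReal.ofReal ((ε / f x) ^ γ) ∂ν
      ≤ ∫⁻ x in ⋃ k, shell k, ENNReal.ofReal ((ε / f x) ^ γ) ∂ν :=
        lintegral_mono' (Measure.restrict_mono_ae hsub) le_rfl
    _ ≤ ∑' k, ∫⁻ x in shell k, ENNReal.ofReal ((ε / f x) ^ γ) ∂ν := lintegral_iUnion_le _ _
    _ ≤ ∑' k, ENNReal.ofReal (2 * C₁ * ε * r ^ k) := by
        gcongr with k
        refine (setLIntegral_div_rpow_shell_le hb hγ hε (ht k)).trans ?_
        gcongr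
        exact htr k
    _ = ENNReal.ofReal (2 * C₁ / (1 - r) * ε) := by
        rw [← ENNReal.ofReal_tsum_of_nonneg (fun k => by positivity)
          ((summable_geometric_of_lt_one hr₀ hr₁).mul_left _), tsum_mul_left,
          tsum_geometric_of_lt_one hr₀ hr₁]
        congr 1
        ring

theorem setLIntegral_div_rpow_le_of_one_lt
    (hb : ∀ s, 0 ≤ s → ν {x | f x ≤ s} ≤ ENNReal.ofReal (C₁ * s)) (hC₁ : 0 ≤ C₁)
    {α ε : ℝ} (hα : 1 < α) (hε : 0 < ε) :
    ∫⁻ x in {x | ε ≤ f x}, ENNReal.ofReal ((ε / f x) ^ α) ∂ν ≤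
      ENNReal.ofReal (2 * C₁ / (1 - 2 ^ (1 - α)) * ε) := by
  refine setLIntegral_div_rpow_le_of_ae_mem_shells hb hC₁ (by linarith) hε (by positivity)
    (Real.rpow_lt_one_of_one_lt_of_neg one_lt_two (by linarith)) (t := fun k => ε * 2 ^ k)
    (fun k => by positivity) (fun k => ?_) (ae_of_all _ fun x (hx : ε ≤ f x) => ?_)
  · rw [mul_div_cancel_left₀ _ hε.ne', ← Real.rpow_pow_comm zero_le_two]
  · obtain ⟨k, hk₁, hk₂⟩ := exists_nat_pow_near ((one_le_div hε).2 hx) one_lt_two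
    refine ⟨k, ?_, ?_⟩
    · rwa [le_div_iff₀ hε, mul_comm] at hk₁
    · rw [div_lt_iff₀ hε, pow_succ] at hk₂
      linarith

theorem setLIntegral_div_rpow_le_of_lt_one
    (hb : ∀ s, 0 ≤ s → ν {x | f x ≤ s} ≤ ENNReal.ofReal (C₁ * s)) (hC₁ : 0 ≤ C₁)
    {β ε : ℝ} (hβ₀ : 0 ≤ β) (hβ₁ : β < 1) (hε : 0 < ε) :
    ∫⁻ x in {x | f x < ε}, ENNReal.ofReal ((ε / f x) ^ β) ∂ν ≤
      ENNReal.ofReal (2 * C₁ / (1 - 2⁻¹ ^ (1 - β)) * ε) := by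
  refine setLIntegral_div_rpow_le_of_ae_mem_shells hb hC₁ hβ₀ hε (by positivity)
    (Real.rpow_lt_one (by norm_num) (by norm_num) (by linarith))
    (t := fun k => ε / 2 ^ (k + 1)) (fun k => by positivity) (fun k => ?_) ?_
  · rw [div_div_cancel_left' hε.ne', ← inv_pow, ← Real.rpow_pow_comm (by norm_num)]
    exact pow_le_pow_of_le_one (by positivity)
      (Real.rpow_le_one (by norm_num) (by norm_num) (by linarith)) k.le_succ
  · filter_upwards [ae_pos_of_measure_le_le hb] with x hx (hxε : f x < ε)
    obtain ⟨k, hk₁, hk₂⟩ := exists_nat_pow_near ((one_le_div hx).2 hxε.le) one_lt_two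
    refine ⟨k, ?_, ?_⟩
    · rw [div_le_iff₀ (by positivity), mul_comm, ← div_le_iff₀ hx]
      exact hk₂.le
    · rw [pow_succ, ← div_div, mul_div_cancel₀ _ two_ne_zero, le_div_iff₀ (by positivity),
        mul_comm, ← le_div_iff₀ hx]
      exact hk₁

end Layers

theorem abs_rpow_le_mul_div_rpow {y K ε t γ q : ℝ} (hK : 0 ≤ K) (hε : 0 ≤ ε) (ht : 0 ≤ t)
    (hq : 0 ≤ q) (hy : |y| ≤ K * (ε / t) ^ γ) : |y| ^ q ≤ K ^ q * (ε / t) ^ (γ * q) := by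
  calc |y| ^ q ≤ (K * (ε / t) ^ γ) ^ q := Real.rpow_le_rpow (abs_nonneg y) hy hq
    _ = K ^ q * (ε / t) ^ (γ * q) := by
        rw [Real.mul_rpow hK (by positivity), ← Real.rpow_mul (by positivity)]

theorem one_add_log_le_mul_rpow {s r : ℝ} (hs : 1 ≤ s) (hr : 0 < r) :
    1 + Real.log s ≤ (1 + r⁻¹) * s ^ r := by
  have hlog : Real.log s ≤ s ^ r / r := Real.log_le_rpow_div (by linarith) hr
  have hone : 1 ≤ s ^ r := Real.one_le_rpow hs hr.le
  rw [div_eq_mul_inv] at hlog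
  nlinarith [inv_pos.2 hr]

theorem one_add_abs_log_le {t ε : ℝ} (ht : 0 < t) (htε : t ≤ ε) (hε : ε ≤ 1) :
    1 + |Real.log t| ≤ (1 + |Real.log ε|) * (1 + Real.log (ε / t)) := by
  have hε₀ : 0 < ε := ht.trans_le htε
  have hlogε : Real.log ε ≤ 0 := Real.log_nonpos hε₀.le hε
  have hlogt : Real.log t ≤ 0 := Real.log_nonpos ht.le (htε.trans hε)
  have hratio : 0 ≤ Real.log (ε / t) := Real.log_nonneg ((one_le_div ht).2 htε)
  rw [abs_of_nonpos hlogt, abs_of_nonpos hlogε, Real.log_div hε₀.ne' ht.ne'] at *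
  nlinarith

theorem abs_rpow_le_of_abs_le_log {y C ε t q : ℝ} (hC : 0 ≤ C) (hq : 0 < q) (ht : 0 < t)
    (htε : t ≤ ε) (hε : ε ≤ 1) (hy : |y| ≤ C * (1 + |Real.log t|)) :
    |y| ^ q ≤ (C * (1 + 2 * q) * (1 + |Real.log ε|)) ^ q * (ε / t) ^ (2⁻¹ : ℝ) := by
  have hr : 0 < (2 * q)⁻¹ := by positivity
  have hy' : |y| ≤ C * (1 + 2 * q) * (1 + |Real.log ε|) * (ε / t) ^ (2 * q)⁻¹ := by
    calc |y| ≤ C * ((1 + |Real.log ε|) * (1 + Real.log (ε / t))) :=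
          hy.trans (by gcongr; exact one_add_abs_log_le ht htε hε)
      _ ≤ C * ((1 + |Real.log ε|) * ((1 + (2 * q)⁻¹⁻¹) * (ε / t) ^ (2 * q)⁻¹)) := by
          gcongr
          exact one_add_log_le_mul_rpow ((one_le_div ht).2 htε) hr
      _ = C * (1 + 2 * q) * (1 + |Real.log ε|) * (ε / t) ^ (2 * q)⁻¹ := by
          rw [inv_inv]; ring
  convert abs_rpow_le_mul_div_rpow (by positivity) (ht.le.trans htε) ht.le hq.le hy' using 3
  field_simp

section Regions

variable {X : Type*} [MeasurableSpace X] {ν : Measure X} {δ g : X → ℝ} {C₁ C q ε : ℝ}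

theorem setLIntegral_abs_rpow_far_le (hδ : Measurable δ)
    (hb : ∀ s, 0 ≤ s → ν {x | δ x ≤ s} ≤ ENNReal.ofReal (C₁ * s)) (hC₁ : 0 ≤ C₁) (hC : 0 ≤ C)
    {σ : ℝ} (hq : 0 ≤ q) (hα : 1 < (1 - σ) * q) (hε : 0 < ε)
    (hg : ∀ᵐ x ∂ν, ε ≤ δ x → |g x| ≤ C * (ε / δ x) ^ (1 - σ)) :
    ∫⁻ x in {x | ε ≤ δ x}, ENNReal.ofReal (|g x| ^ q) ∂ν ≤
      ENNReal.ofReal (C ^ q) * ENNReal.ofReal (2 * C₁ / (1 - 2 ^ (1 - (1 - σ) * q)) * ε) := by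
  calc ∫⁻ x in {x | ε ≤ δ x}, ENNReal.ofReal (|g x| ^ q) ∂ν
      ≤ ∫⁻ x in {x | ε ≤ δ x}, ENNReal.ofReal (C ^ q) *
          ENNReal.ofReal ((ε / δ x) ^ ((1 - σ) * q)) ∂ν := by
        refine setLIntegral_mono_ae (by fun_prop) (hg.mono fun x hx (hxε : ε ≤ δ x) => ?_)
        rw [← ENNReal.ofReal_mul (by positivity)]
        exact ENNReal.ofReal_le_ofReal
          (abs_rpow_le_mul_div_rpow hC hε.le (hε.le.trans hxε) hq (hx hxε))
    _ = ENNReal.ofReal (C ^ q) *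
          ∫⁻ x in {x | ε ≤ δ x}, ENNReal.ofReal ((ε / δ x) ^ ((1 - σ) * q)) ∂ν :=
        lintegral_const_mul _ (by fun_prop)
    _ ≤ _ := by gcongr; exact setLIntegral_div_rpow_le_of_one_lt hb hC₁ hα hε

theorem setLIntegral_abs_rpow_near_le (hδ : Measurable δ)
    (hb : ∀ s, 0 ≤ s → ν {x | δ x ≤ s} ≤ ENNReal.ofReal (C₁ * s)) (hC₁ : 0 ≤ C₁) (hC : 0 ≤ C)
    (hq : 0 < q) (hε₀ : 0 < ε) (hε₁ : ε ≤ 1)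
    (hg : ∀ᵐ x ∂ν, δ x ≤ ε → |g x| ≤ C * (1 + |Real.log (δ x)|)) :
    ∫⁻ x in {x | δ x < ε}, ENNReal.ofReal (|g x| ^ q) ∂ν ≤
      ENNReal.ofReal ((C * (1 + 2 * q) * (1 + |Real.log ε|)) ^ q) *
        ENNReal.ofReal (2 * C₁ / (1 - 2⁻¹ ^ (1 - 2⁻¹ : ℝ)) * ε) := by
  calc ∫⁻ x in {x | δ x < ε}, ENNReal.ofReal (|g x| ^ q) ∂ν
      ≤ ∫⁻ x in {x | δ x < ε}, ENNReal.ofReal ((C * (1 + 2 * q) * (1 + |Real.log ε|)) ^ q) *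
          ENNReal.ofReal ((ε / δ x) ^ (2⁻¹ : ℝ)) ∂ν := by
        refine setLIntegral_mono_ae (by fun_prop) ?_
        filter_upwards [hg, ae_pos_of_measure_le_le hb] with x hx hx₀ (hxε : δ x < ε)
        rw [← ENNReal.ofReal_mul (by positivity)]
        exact ENNReal.ofReal_le_ofReal
          (abs_rpow_le_of_abs_le_log hC hq hx₀ hxε.le hε₁ (hx hxε.le))
    _ = ENNReal.ofReal ((C * (1 + 2 * q) * (1 + |Real.log ε|)) ^ q) *
          ∫⁻ x in {x | δ x < ε}, ENNReal.ofReal ((ε / δ x) ^ (2⁻¹ : ℝ)) ∂ν :=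
        lintegral_const_mul _ (by fun_prop)
    _ ≤ _ := by
        gcongr
        exact setLIntegral_div_rpow_le_of_lt_one hb hC₁ (by norm_num) (by norm_num) hε₀

theorem exists_lintegral_abs_rpow_le (hδ : Measurable δ)
    (hb : ∀ s, 0 ≤ s → ν {x | δ x ≤ s} ≤ ENNReal.ofReal (C₁ * s)) (hC₁ : 0 < C₁) (hC : 0 < C)
    {σ : ℝ} (hq : 0 < q) (hα : 1 < (1 - σ) * q) :
    ∃ D > 0, ∀ ε : ℝ, 0 < ε → ε < 1 → ∀ g : X → ℝ,
      (∀ᵐ x ∂ν, ε ≤ δ x → |g x| ≤ C * (ε / δ x) ^ (1 - σ)) →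
      (∀ᵐ x ∂ν, δ x ≤ ε → |g x| ≤ C * (1 + |Real.log (δ x)|)) →
      ∫⁻ x, ENNReal.ofReal (|g x| ^ q) ∂ν ≤
        ENNReal.ofReal (D * ε * (1 + |Real.log ε|) ^ q) := by
  set c₁ := 2 * C₁ / (1 - 2 ^ (1 - (1 - σ) * q))
  set c₂ := 2 * C₁ / (1 - 2⁻¹ ^ (1 - 2⁻¹ : ℝ))
  have hc₁ : 0 < c₁ := div_pos (by positivity)
    (sub_pos.2 (Real.rpow_lt_one_of_one_lt_of_neg one_lt_two (by linarith)))
  have hc₂ : 0 < c₂ := div_pos (by positivity)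
    (sub_pos.2 (Real.rpow_lt_one (by norm_num) (by norm_num) (by norm_num)))
  refine ⟨C ^ q * c₁ + (C * (1 + 2 * q)) ^ q * c₂, by positivity,
    fun ε hε₀ hε₁ g hg₁ hg₂ => ?_⟩
  set L := |Real.log ε|
  rw [← lintegral_add_compl _ (measurableSet_le measurable_const hδ)]
  simp only [Set.compl_ofPred, not_le]
  calc _ ≤ ENNReal.ofReal (C ^ q) * ENNReal.ofReal (c₁ * ε) +
        ENNReal.ofReal ((C * (1 + 2 * q) * (1 + L)) ^ q) * ENNReal.ofReal (c₂ * ε) :=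
        add_le_add (setLIntegral_abs_rpow_far_le hδ hb hC₁.le hC.le hq.le hα hε₀ hg₁)
          (setLIntegral_abs_rpow_near_le hδ hb hC₁.le hC.le hq hε₀ hε₁.le hg₂)
    _ ≤ _ := by
        have hL : 1 ≤ (1 + L) ^ q := Real.one_le_rpow (by simp [L]) hq.le
        rw [← ENNReal.ofReal_mul (by positivity), ← ENNReal.ofReal_mul (by positivity),
          ← ENNReal.ofReal_add (by positivity) (by positivity),
          Real.mul_rpow (by positivity) (by positivity)]
        refine ENNReal.ofReal_le_ofReal ?_
        have : 0 ≤ C ^ q * c₁ * ε := by positivity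
        nlinarith

end Regions

theorem stmt13_general (d : ℕ) (Ω : Set (EuclideanSpace ℝ (Fin d)))
    (hΩ : Bornology.IsBounded Ω)
    (C₁ : ℝ) (hC₁ : 0 < C₁)
    (hlayer : ∀ t : ℝ, 0 < t →
      (volume {x ∈ Ω | Metric.infDist x (frontier Ω) < t}).toReal ≤ C₁ * t)
    (C σ : ℝ) (hC : 0 < C)
    (q : ℝ) (hq : 1 < q) (hq' : 1 < (1 - σ) * q) :
    ∃ C' > 0, ∀ ε : ℝ, 0 < ε → ε < 1 →
      ∀ R : EuclideanSpace ℝ (Fin d) → ℝ, Measurable R →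
      (∀ x ∈ Ω, ε ≤ Metric.infDist x (frontier Ω) →
        |R x| ≤ C * (ε / Metric.infDist x (frontier Ω)) ^ (1 - σ)) →
      (∀ x ∈ Ω, Metric.infDist x (frontier Ω) ≤ ε →
        |R x| ≤ C * (1 + |Real.log (Metric.infDist x (frontier Ω))|)) →
      (∫ x in Ω, |R x| ^ q) ^ (1 / q) ≤ C' * ε ^ (1 / q) * (1 + |Real.log ε|) := by
  have hq₀ : 0 < q := by linarith
  have hδ : Measurable fun x => Metric.infDist x (frontier Ω) :=
    (Metric.continuous_infDist_pt _).measurable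
  have hb : ∀ t, 0 < t → volume.restrict Ω {x | Metric.infDist x (frontier Ω) < t} ≤
      ENNReal.ofReal (C₁ * t) := fun t ht => by
    rw [Measure.restrict_apply (measurableSet_lt hδ measurable_const), Set.inter_comm,
      ← ENNReal.ofReal_toReal
        (measure_ne_top_of_subset Set.inter_subset_left hΩ.measure_lt_top.ne)]
    exact ENNReal.ofReal_le_ofReal (hlayer t ht)
  obtain ⟨D, hD, hbound⟩ := exists_lintegral_abs_rpow_le hδ
    (fun s => measure_le_le_of_measure_lt_le hb) hC₁ hC hq₀ hq'
  refine ⟨D ^ (1 / q), by positivity, fun ε hε₀ hε₁ R hR hR₁ hR₂ => ?_⟩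
  have hlint := hbound ε hε₀ hε₁ R ((ae_restrict_iff (by measurability)).2 (ae_of_all _ hR₁))
    ((ae_restrict_iff (by measurability)).2 (ae_of_all _ hR₂))
  have hL : 0 ≤ 1 + |Real.log ε| := by positivity
  calc (∫ x in Ω, |R x| ^ q) ^ (1 / q) ≤ (D * ε * (1 + |Real.log ε|) ^ q) ^ (1 / q) := by
        refine Real.rpow_le_rpow (by positivity) ?_ (by positivity)
        rw [integral_eq_lintegral_of_nonneg_ae (ae_of_all _ fun x => by positivity)
          (hR.abs.pow_const q).aestronglyMeasurable]
        exact ENNReal.toReal_le_of_le_ofReal (by positivity) hlint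
    _ = D ^ (1 / q) * ε ^ (1 / q) * (1 + |Real.log ε|) := by
        rw [Real.mul_rpow (by positivity) (by positivity), Real.mul_rpow hD.le hε₀.le,
          ← Real.rpow_mul hL, mul_one_div_cancel hq₀.ne', Real.rpow_one]

/-- For a bounded Lipschitz domain `Ω` (with the layer bound
`|{x ∈ Ω : δ(x) < t}| ≤ C₁ t`), any function `R` with `|R(x)| ≤ C (ε/δ(x))^{1-σ}` for
`δ(x) ≥ ε` and `|R(x)| ≤ C(1+|log δ(x)|)` for `δ(x) ≤ ε` satisfies
`‖R‖_{L^q(Ω)} ≤ C' ε^{1/q}(1+|log ε|)`, with `C'` depending on `q`, `σ`, `C`, `C₁`, `Ω`. -/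
theorem stmt13 (d : ℕ) (Ω : Set (EuclideanSpace ℝ (Fin d)))
    (hΩ : Bornology.IsBounded Ω)
    (C₁ : ℝ) (hC₁ : 0 < C₁)
    (hlayer : ∀ t : ℝ, 0 < t →
      (volume {x ∈ Ω | Metric.infDist x (frontier Ω) < t}).toReal ≤ C₁ * t)
    (C σ : ℝ) (hC : 0 < C) (hσ0 : 0 < σ) (hσ1 : σ < 1)
    (q : ℝ) (hq : 1 < q) (hq' : 1 < (1 - σ) * q) :
    ∃ C' > 0, ∀ ε : ℝ, 0 < ε → ε < 1 →
      ∀ R : EuclideanSpace ℝ (Fin d) → ℝ, Measurable R →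
      (∀ x ∈ Ω, ε ≤ Metric.infDist x (frontier Ω) →
        |R x| ≤ C * (ε / Metric.infDist x (frontier Ω)) ^ (1 - σ)) →
      (∀ x ∈ Ω, Metric.infDist x (frontier Ω) ≤ ε →
        |R x| ≤ C * (1 + |Real.log (Metric.infDist x (frontier Ω))|)) →
      (∫ x in Ω, |R x| ^ q) ^ (1 / q) ≤ C' * ε ^ (1 / q) * (1 + |Real.log ε|) :=
  stmt13_general d Ω hΩ C₁ hC₁ hlayer C σ hC q hq hq'
end

section
/- Suppose r_j ≤ C√τ for all j and Σ_j r_j^{α+d-1} ≤ C_α τ^α for 0 ≤ α < d−1 (with d ≥ 3, 0 < τ < 1). Then Σ_j r_j^d (1 + |log r_j|)² ≤ C τ^{1-σ}(1 + |log τ|)² for any fixed σ ∈ (0,1), with C depending on d, σ and the constants above. -/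
lemma stmt15_key (σ B : ℝ) (hσ0 : 0 < σ) (hB : 1 ≤ B) (x : ℝ) (hx : 0 < x) (hxB : x ≤ B) :
    x ^ σ * (1 + |Real.log x|) ^ 2 ≤ max ((1 + 2/σ)^2) (B ^ σ * (1 + B)^2) := by
  rcases le_or_gt x 1 with h1 | h1
  · refine le_trans ?_ (le_max_left _ _)
    set y := x ^ (-(σ/2)) with hy
    have hy0 : 0 < y := Real.rpow_pos_of_pos hx _
    have hy1 : 1 ≤ y := Real.one_le_rpow_of_pos_of_le_one_of_nonpos hx h1 (by linarith)
    have hlog : |Real.log x| ≤ (2/σ) * y := by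
      have habs : |Real.log x| = Real.log x⁻¹ := by
        rw [Real.log_inv, abs_of_nonpos (Real.log_nonpos hx.le h1)]
      have hle : Real.log x⁻¹ ≤ (x⁻¹) ^ (σ/2) / (σ/2) :=
        Real.log_le_rpow_div (inv_nonneg.mpr hx.le) (by linarith)
      have hinv : (x⁻¹) ^ (σ/2) = y := by
        rw [hy, ← Real.rpow_neg_one x, ← Real.rpow_mul hx.le]
        ring_nf
      rw [habs]
      calc Real.log x⁻¹ ≤ (x⁻¹) ^ (σ/2) / (σ/2) := hle
        _ = (2/σ) * y := by rw [hinv]; field_simp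
    have hA : 1 + |Real.log x| ≤ (1 + 2/σ) * y := by nlinarith [abs_nonneg (Real.log x)]
    have hxy : x ^ σ * (y * y) = 1 := by
      rw [hy, ← Real.rpow_add hx, ← Real.rpow_add hx]
      rw [show σ + (-(σ / 2) + -(σ / 2)) = 0 by ring, Real.rpow_zero]
    have hxσ : 0 < x ^ σ := Real.rpow_pos_of_pos hx _
    nlinarith [abs_nonneg (Real.log x), mul_le_mul hA hA (by positivity) (by positivity),
      mul_le_mul_of_nonneg_left (mul_le_mul hA hA (by positivity) (by positivity)) hxσ.le]
  · refine le_trans ?_ (le_max_right _ _)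
    have hlx : Real.log x ≤ x - 1 := Real.log_le_sub_one_of_pos hx
    have habs : |Real.log x| = Real.log x := abs_of_nonneg (Real.log_nonneg h1.le)
    have h2 : (1 + |Real.log x|) ^ 2 ≤ (1 + B) ^ 2 := by
      apply pow_le_pow_left₀ (by positivity)
      rw [habs]; linarith
    have h3 : x ^ σ ≤ B ^ σ := Real.rpow_le_rpow hx.le hxB hσ0.le
    have hxσ : 0 ≤ x ^ σ := (Real.rpow_pos_of_pos hx _).le
    exact mul_le_mul h3 h2 (by positivity) (by positivity)

/-- If `r_j ≤ C√τ` for all `j` and `Σ_j r_j^{α+d-1} ≤ C_α τ^α` for all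
`0 ≤ α < d-1` (with `d ≥ 3`, `0 < τ < 1`), then
`Σ_j r_j^d (1+|log r_j|)² ≤ C' τ^{1-σ}(1+|log τ|)²` for any fixed `σ ∈ (0,1)`. -/
theorem stmt15 (d : ℕ) (hd : 3 ≤ d) (σ C : ℝ) (hσ0 : 0 < σ) (hσ1 : σ < 1) (hC : 0 < C)
    (Cc : ℝ → ℝ) :
    ∃ C' > 0, ∀ τ : ℝ, 0 < τ → τ < 1 → ∀ (nn : ℕ) (r : Fin nn → ℝ),
      (∀ j, 0 < r j) →
      (∀ j, r j ≤ C * Real.sqrt τ) →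
      (∀ α : ℝ, 0 ≤ α → α < (d : ℝ) - 1 →
        ∑ j, r j ^ (α + (d : ℝ) - 1) ≤ Cc α * τ ^ α) →
      ∑ j, r j ^ (d : ℝ) * (1 + |Real.log (r j)|) ^ 2 ≤
        C' * τ ^ (1 - σ) * (1 + |Real.log τ|) ^ 2 := by
  set B : ℝ := max 1 C with hBdef
  have hB : 1 ≤ B := le_max_left _ _
  set M : ℝ := max ((1 + 2/σ)^2) (B ^ σ * (1 + B)^2) with hMdef
  have hM0 : 0 < M := lt_of_lt_of_le (by positivity) (le_max_left _ _)
  refine ⟨max 1 (M * Cc (1 - σ)), lt_of_lt_of_le one_pos (le_max_left _ _), ?_⟩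
  intro τ hτ0 hτ1 nn r hr hrC hsum
  have hd3 : (3:ℝ) ≤ (d:ℝ) := by exact_mod_cast hd
  have hα := hsum (1 - σ) (by linarith) (by linarith)
  have hrB : ∀ j, r j ≤ B := fun j => by
    have h1 : Real.sqrt τ ≤ 1 := Real.sqrt_le_one.mpr hτ1.le
    calc r j ≤ C * Real.sqrt τ := hrC j
      _ ≤ C * 1 := by nlinarith
      _ = C := mul_one C
      _ ≤ B := le_max_right _ _
  have hterm : ∀ j, r j ^ (d:ℝ) * (1 + |Real.log (r j)|) ^ 2
      ≤ M * r j ^ ((1 - σ) + (d:ℝ) - 1) := by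
    intro j
    have hsplit : r j ^ (d:ℝ) = r j ^ ((1 - σ) + (d:ℝ) - 1) * r j ^ σ := by
      rw [← Real.rpow_add (hr j)]
      ring_nf
    have hk := stmt15_key σ B hσ0 hB (r j) (hr j) (hrB j)
    have hk2 : M * r j ^ ((1 - σ) + (d:ℝ) - 1) =
        r j ^ ((1 - σ) + (d:ℝ) - 1) * M := mul_comm _ _
    rw [hsplit, hk2, mul_assoc]
    exact mul_le_mul_of_nonneg_left (le_trans hk hMdef.ge)
      (Real.rpow_nonneg (hr j).le _)
  have hS : ∑ j, r j ^ (d:ℝ) * (1 + |Real.log (r j)|) ^ 2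
      ≤ M * (Cc (1 - σ) * τ ^ (1 - σ)) := by
    calc ∑ j, r j ^ (d:ℝ) * (1 + |Real.log (r j)|) ^ 2
        ≤ ∑ j, M * r j ^ ((1 - σ) + (d:ℝ) - 1) := Finset.sum_le_sum (fun j _ => hterm j)
      _ = M * ∑ j, r j ^ ((1 - σ) + (d:ℝ) - 1) := by rw [Finset.mul_sum]
      _ ≤ M * (Cc (1 - σ) * τ ^ (1 - σ)) := mul_le_mul_of_nonneg_left hα hM0.le
  refine le_trans hS ?_
  have hτp : 0 < τ ^ (1 - σ) := Real.rpow_pos_of_pos hτ0 _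
  have hL : 1 ≤ (1 + |Real.log τ|) ^ 2 := by nlinarith [abs_nonneg (Real.log τ)]
  have h1 : M * Cc (1 - σ) ≤ max 1 (M * Cc (1 - σ)) := le_max_right _ _
  have h0 : (0:ℝ) < max 1 (M * Cc (1 - σ)) := lt_of_lt_of_le one_pos (le_max_left _ _)
  calc M * (Cc (1 - σ) * τ ^ (1 - σ)) = (M * Cc (1 - σ)) * τ ^ (1 - σ) := by ring
    _ ≤ max 1 (M * Cc (1 - σ)) * τ ^ (1 - σ) := mul_le_mul_of_nonneg_right h1 hτp.le
    _ ≤ max 1 (M * Cc (1 - σ)) * τ ^ (1 - σ) * (1 + |Real.log τ|) ^ 2 :=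
        le_mul_of_one_le_right (by positivity) hL
end
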